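/- arXiv:2510.25236 — 2 statements merged into one kernel-verified Lean document; each statement's English description precedes it below -/
import Mathlib

section
/- Let L : ℝ^n → ℝ be a convex differentiable function whose gradient is Lipschitz with constant L₀ > 0, let b ∈ ℝ^n be a fixed point, and let λ > ‖∇L(b)‖₂. Then for any point x with ‖x - b‖₂ ≤ (λ - ‖∇L(b)‖₂)/L₀, the point x is the unique minimizer of α ↦ L(α) + λ‖x - α‖₂ over ℝ^n; in particular min_α (L(α) + λ‖x - α‖₂) = L(x). -/
/-!
By the Lipschitz bound, `‖∇L x‖ ≤ ‖∇L b‖ + L₀ ‖x - b‖ ≤ λ`, so the supporting hyperplane at `x`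
already gives `L x ≤ L α + λ ‖x - α‖`. For strictness use the sharper lower bound
`L α ≥ L x + ⟪∇L x, α - x⟫ + ‖∇L α - ∇L x‖² / (2 L₀)` of convex functions with `L₀`-Lipschitz
gradient: equality would force `∇L α = ∇L x`, `⟪∇L x, α - x⟫ = -λ ‖α - x‖` and `‖∇L x‖ = λ`.
Then cocoercivity of `∇L` between `b` and `α` gives `⟪∇L x - ∇L b, α - x⟫ ≥ 0`, while
Cauchy–Schwarz gives `⟪∇L x - ∇L b, α - x⟫ ≤ (‖∇L b‖ - λ) ‖α - x‖ < 0`.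
-/

open Set AffineMap
open scoped RealInnerProductSpace

section LipschitzGradient

variable {E : Type*} [NormedAddCommGroup E] [InnerProductSpace ℝ E] [CompleteSpace E]
  {f : E → ℝ} {f' : E → E} {K : ℝ}

theorem HasGradientAt.hasDerivAt_comp_lineMap {g u v : E} {t : ℝ}
    (hf : HasGradientAt f g (lineMap u v t)) :
    HasDerivAt (f ∘ lineMap u v) ⟪g, v - u⟫ t := by
  simpa using hf.hasFDerivAt.comp_hasDerivAt t hasDerivAt_lineMap

theorem ConvexOn.add_inner_le_of_hasGradientAt {s : Set E} {g u v : E}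
    (hconv : ConvexOn ℝ s f) (hu : u ∈ s) (hv : v ∈ s) (hf : HasGradientAt f g u) :
    f u + ⟪g, v - u⟫ ≤ f v := by
  have hderiv : HasDerivAt (f ∘ lineMap u v) ⟪g, v - u⟫ (0 : ℝ) :=
    HasGradientAt.hasDerivAt_comp_lineMap (by rwa [lineMap_apply_zero])
  have hslope := (hconv.comp_affineMap (lineMap u v)).le_slope_of_hasDerivAt
    (by simpa using hu) (by simpa using hv) one_pos hderiv
  simp only [slope_def_field, Function.comp_apply, lineMap_apply_one, lineMap_apply_zero, sub_zero,
    div_one] at hslope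
  linarith

theorem le_add_inner_add_sq_of_lipschitz_gradient (hf : ∀ x, HasGradientAt f (f' x) x)
    (hlip : ∀ x y, ‖f' x - f' y‖ ≤ K * ‖x - y‖) (u v : E) :
    f v ≤ f u + ⟪f' u, v - u⟫ + K / 2 * ‖v - u‖ ^ 2 := by
  let φ : ℝ → ℝ := fun t => f (lineMap u v t) - t * ⟪f' u, v - u⟫ - K / 2 * t ^ 2 * ‖v - u‖ ^ 2
  have hφ : ∀ t, HasDerivAt φ (⟪f' (lineMap u v t) - f' u, v - u⟫ - K * t * ‖v - u‖ ^ 2) t := by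
    intro t
    have := (((hf (lineMap u v t)).hasDerivAt_comp_lineMap).sub
      ((hasDerivAt_id t).mul_const ⟪f' u, v - u⟫)).sub
      (((hasDerivAt_pow 2 t).const_mul (K / 2)).mul_const (‖v - u‖ ^ 2))
    exact this.congr_deriv (by rw [inner_sub_left]; ring)
  have hφ' : ∀ t ∈ interior (Icc (0 : ℝ) 1), deriv φ t ≤ 0 := by
    intro t ht
    rw [interior_Icc] at ht
    rw [(hφ t).deriv, sub_nonpos]
    calc ⟪f' (lineMap u v t) - f' u, v - u⟫
        ≤ ‖f' (lineMap u v t) - f' u‖ * ‖v - u‖ := real_inner_le_norm _ _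
      _ ≤ K * dist (lineMap u v t) u * ‖v - u‖ := by
        gcongr; simpa [dist_eq_norm] using hlip (lineMap u v t) u
      _ = K * t * ‖v - u‖ ^ 2 := by
        rw [dist_lineMap_left, Real.norm_of_nonneg ht.1.le, dist_eq_norm']; ring
  have hanti := antitoneOn_of_deriv_nonpos (convex_Icc 0 1)
    (fun t _ => (hφ t).continuousAt.continuousWithinAt)
    (fun t _ => (hφ t).differentiableAt.differentiableWithinAt) hφ'
    (left_mem_Icc.2 zero_le_one) (right_mem_Icc.2 zero_le_one) zero_le_one
  simp only [φ, lineMap_apply_one, lineMap_apply_zero, one_mul, one_pow, mul_one, zero_mul,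
    ne_eq, OfNat.ofNat_ne_zero, not_false_eq_true, zero_pow, mul_zero, sub_zero] at hanti
  linarith

theorem ConvexOn.add_inner_add_sq_div_le_of_lipschitz_gradient (hconv : ConvexOn ℝ univ f)
    (hK : 0 < K) (hf : ∀ x, HasGradientAt f (f' x) x)
    (hlip : ∀ x y, ‖f' x - f' y‖ ≤ K * ‖x - y‖) (u v : E) :
    f u + ⟪f' u, v - u⟫ + ‖f' v - f' u‖ ^ 2 / (2 * K) ≤ f v := by
  set Δ := f' v - f' u
  -- `w` minimizes the gap between the quadratic upper bound at `v` and the tangent plane at `u`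
  set w := v - K⁻¹ • Δ with hw
  have hsupport := hconv.add_inner_le_of_hasGradientAt (mem_univ u) (mem_univ w) (hf u)
  have hdescent := le_add_inner_add_sq_of_lipschitz_gradient hf hlip v w
  have hwu : ⟪f' u, w - u⟫ = ⟪f' u, v - u⟫ - K⁻¹ * ⟪f' u, Δ⟫ := by
    rw [show w - u = (v - u) - K⁻¹ • Δ by rw [hw]; abel, inner_sub_right, real_inner_smul_right]
  have hwv : w - v = -(K⁻¹ • Δ) := by rw [hw]; abel
  have hinner : ⟪f' v, w - v⟫ = -(K⁻¹ * ⟪f' v, Δ⟫) := by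
    rw [hwv, inner_neg_right, real_inner_smul_right]
  have hnorm : ‖w - v‖ = K⁻¹ * ‖Δ‖ := by
    rw [hwv, norm_neg, norm_smul, Real.norm_of_nonneg (inv_nonneg.2 hK.le)]
  have hΔ : K⁻¹ * ⟪f' v, Δ⟫ - K⁻¹ * ⟪f' u, Δ⟫ - K / 2 * (K⁻¹ * ‖Δ‖) ^ 2
      = ‖Δ‖ ^ 2 / (2 * K) := by
    rw [← mul_sub, ← inner_sub_left, real_inner_self_eq_norm_sq]
    field_simp
    ring
  rw [hwu] at hsupport
  rw [hinner, hnorm] at hdescent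
  linarith

theorem ConvexOn.sq_norm_sub_div_le_inner_of_lipschitz_gradient (hconv : ConvexOn ℝ univ f)
    (hK : 0 < K) (hf : ∀ x, HasGradientAt f (f' x) x)
    (hlip : ∀ x y, ‖f' x - f' y‖ ≤ K * ‖x - y‖) (u v : E) :
    ‖f' v - f' u‖ ^ 2 / K ≤ ⟪f' v - f' u, v - u⟫ := by
  have huv := hconv.add_inner_add_sq_div_le_of_lipschitz_gradient hK hf hlip u v
  have hvu := hconv.add_inner_add_sq_div_le_of_lipschitz_gradient hK hf hlip v u
  rw [norm_sub_rev, ← neg_sub v u, inner_neg_right] at hvu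
  have hhalf : ‖f' v - f' u‖ ^ 2 / K
      = ‖f' v - f' u‖ ^ 2 / (2 * K) + ‖f' v - f' u‖ ^ 2 / (2 * K) := by
    field_simp
    ring
  rw [inner_sub_left]
  linarith

theorem ConvexOn.gradient_eq_of_add_mul_norm_le (hconv : ConvexOn ℝ univ f) (hK : 0 < K)
    (hf : ∀ x, HasGradientAt f (f' x) x) (hlip : ∀ x y, ‖f' x - f' y‖ ≤ K * ‖x - y‖)
    {lam : ℝ} {x α : E} (hx : ‖f' x‖ ≤ lam) (h : f α + lam * ‖x - α‖ ≤ f x) :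
    f' α = f' x ∧ ⟪f' x, α - x⟫ = -(lam * ‖x - α‖) := by
  have hlower := hconv.add_inner_add_sq_div_le_of_lipschitz_gradient hK hf hlip x α
  have hcs : -(lam * ‖x - α‖) ≤ ⟪f' x, α - x⟫ := by
    have := neg_le_of_abs_le (abs_real_inner_le_norm (f' x) (α - x))
    rw [norm_sub_rev] at this
    nlinarith [norm_nonneg (x - α)]
  have hsq : ‖f' α - f' x‖ ^ 2 / (2 * K) = 0 := by
    apply le_antisymm _ (by positivity)
    linarith
  refine ⟨?_, by linarith⟩
  simpa [hK.ne', sub_eq_zero] using hsq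

theorem ConvexOn.inner_gradient_sub_nonneg_of_gradient_eq (hconv : ConvexOn ℝ univ f)
    (hK : 0 < K) (hf : ∀ x, HasGradientAt f (f' x) x)
    (hlip : ∀ x y, ‖f' x - f' y‖ ≤ K * ‖x - y‖) {x b α : E} (hα : f' α = f' x)
    (hxb : K * ‖x - b‖ ≤ ‖f' x - f' b‖) :
    0 ≤ ⟪f' x - f' b, α - x⟫ := by
  have hcoco := hconv.sq_norm_sub_div_le_inner_of_lipschitz_gradient hK hf hlip b α
  rw [hα, show α - b = (α - x) + (x - b) by abel, inner_add_right] at hcoco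
  have hxb' : ⟪f' x - f' b, x - b⟫ ≤ ‖f' x - f' b‖ ^ 2 / K :=
    calc ⟪f' x - f' b, x - b⟫ ≤ ‖f' x - f' b‖ * ‖x - b‖ := real_inner_le_norm _ _
      _ ≤ ‖f' x - f' b‖ * (‖f' x - f' b‖ / K) := by
        gcongr; rwa [le_div_iff₀' hK]
      _ = ‖f' x - f' b‖ ^ 2 / K := by ring
  linarith

end LipschitzGradient

/-- If `L` is convex and differentiable with `L₀`-Lipschitz gradient, `b` is a fixed
point, and `λ > ‖∇L(b)‖`, then any `x` with `‖x - b‖ ≤ (λ - ‖∇L(b)‖)/L₀` is the unique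
minimizer of `α ↦ L α + λ‖x - α‖`; in particular the minimum value is `L x`. -/
theorem stmt0 {n : ℕ} (L : EuclideanSpace ℝ (Fin n) → ℝ)
    (g : EuclideanSpace ℝ (Fin n) → EuclideanSpace ℝ (Fin n))
    (L₀ lam : ℝ) (hL₀ : 0 < L₀)
    (hconv : ConvexOn ℝ Set.univ L)
    (hgrad : ∀ x, HasGradientAt L (g x) x)
    (hlip : ∀ x y, ‖g x - g y‖ ≤ L₀ * ‖x - y‖)
    (b : EuclideanSpace ℝ (Fin n)) (hlam : ‖g b‖ < lam)
    (x : EuclideanSpace ℝ (Fin n)) (hx : ‖x - b‖ ≤ (lam - ‖g b‖) / L₀) :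
    ∀ α, α ≠ x → L x < L α + lam * ‖x - α‖ := by
  intro α hα
  by_contra! h
  have hxb : L₀ * ‖x - b‖ ≤ lam - ‖g b‖ := (le_div_iff₀' hL₀).1 hx
  have hgx : ‖g x‖ ≤ ‖g b‖ + ‖g x - g b‖ := norm_le_insert' (g x) (g b)
  obtain ⟨hgα, hinner⟩ := hconv.gradient_eq_of_add_mul_norm_le hL₀ hgrad hlip
    (by linarith [hlip x b]) h
  have hs : 0 < ‖x - α‖ := norm_pos_iff.2 (sub_ne_zero.2 hα.symm)
  have hlam_le : lam ≤ ‖g x‖ := by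
    have := neg_le_of_abs_le (abs_real_inner_le_norm (g x) (α - x))
    rw [norm_sub_rev, hinner] at this
    nlinarith
  have hnonneg := hconv.inner_gradient_sub_nonneg_of_gradient_eq hL₀ hgrad hlip hgα
    (by linarith)
  have hgb : -(‖g b‖ * ‖x - α‖) ≤ ⟪g b, α - x⟫ := by
    simpa [norm_sub_rev] using neg_le_of_abs_le (abs_real_inner_le_norm (g b) (α - x))
  rw [inner_sub_left, hinner] at hnonneg
  nlinarith
end

section
/- Let A ∈ ℝ^{m×n} be a nonzero matrix, let z₁,…,z_K ∈ ℝ^n with ‖z_k‖₂ ≤ α₁ for all k, and let w₁,…,w_K ≥ 0 with Σ w_k > 0. Suppose Σ_k w_k z_k z_kᵀ ⪰ (α₂² Σ_k w_k / n) I_n for some 0 < α₂ ≤ α₁. Then for every t ∈ [0, α₂/√n], the sum of w_k over indices k with ‖A z_k‖₂ > t‖A‖₂ is at least ((α₂²/n − t²)/(α₁² − t²)) · Σ_{j=1}^K w_j. -/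
/-!
Let `v` be a unit vector at which `x ↦ ‖A x‖` attains the spectral norm `σ` (a top right
singular vector). Maximality forces `⟪A v, A x⟫ = σ² ⟪v, x⟫`, so `σ |⟪v, x⟫| ≤ ‖A x‖` for all `x`;
hence `⟪z_k, v⟫² ≤ t²` whenever `‖A z_k‖ ≤ t σ`, while always `⟪z_k, v⟫² ≤ α₁²`. Testing the
frame condition on `v` gives `α₂² W / n ≤ ∑ w_k ⟪z_k, v⟫² ≤ α₁² W_S + t² (W - W_S)`, where `W_S`
is the weight of the indices with `‖A z_k‖ > t σ`, which rearranges to the claim.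
-/

open scoped RealInnerProductSpace

/-- The spectral (ℓ₂ operator) norm of a real matrix. -/
noncomputable def specNorm {m n : Type*} [Fintype m] [Fintype n] [DecidableEq n]
    (A : Matrix m n ℝ) : ℝ :=
  ‖LinearMap.toContinuousLinearMap (Matrix.toEuclideanLin A)‖

theorem Finset.sum_mul_le_of_le_of_forall_not_le {ι : Type*} [Fintype ι] (p : ι → Prop)
    [DecidablePred p] {w a : ι → ℝ} (hw : ∀ k, 0 ≤ w k) {M T : ℝ} (hM : ∀ k, a k ≤ M)
    (hT : ∀ k, ¬p k → a k ≤ T) :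
    ∑ k, w k * a k ≤ (M - T) * ∑ k with p k, w k + T * ∑ k, w k := by
  have hp : ∑ k with p k, w k * a k ≤ M * ∑ k with p k, w k := by
    rw [mul_sum]
    exact sum_le_sum fun k _ => by
      rw [mul_comm M]; exact mul_le_mul_of_nonneg_left (hM k) (hw k)
  have hnp : ∑ k with ¬p k, w k * a k ≤ T * ∑ k with ¬p k, w k := by
    rw [mul_sum]
    exact sum_le_sum fun k hk => by
      rw [mul_comm T]; exact mul_le_mul_of_nonneg_left (hT k (mem_filter.1 hk).2) (hw k)
  rw [← sum_filter_add_sum_filter_not univ p (fun k => w k * a k),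
    ← sum_filter_add_sum_filter_not univ p w]
  linarith

namespace ContinuousLinearMap

variable {E F : Type*} [NormedAddCommGroup E] [InnerProductSpace ℝ E]
  [NormedAddCommGroup F] [InnerProductSpace ℝ F]

theorem exists_norm_eq_one_norm_apply_eq_opNorm [FiniteDimensional ℝ E] [Nontrivial E]
    (L : E →L[ℝ] F) : ∃ v, ‖v‖ = 1 ∧ ‖L v‖ = ‖L‖ := by
  obtain ⟨v, hv, hmax⟩ := (isCompact_sphere (0 : E) 1).exists_isMaxOn
    (NormedSpace.sphere_nonempty.2 zero_le_one) L.continuous.norm.continuousOn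
  have hv : ‖v‖ = 1 := by simpa using hv
  refine ⟨v, hv, le_antisymm (by simpa [hv] using L.le_opNorm v) ?_⟩
  exact opNorm_le_of_unit_norm (norm_nonneg _) fun u hu => hmax (by simpa using hu)

/-- The quadratic `s ↦ ‖L‖² ‖v + s x‖² - ‖L (v + s x)‖²` is nonnegative and vanishes at `s = 0`,
so its linear coefficient must vanish. -/
theorem inner_apply_apply_eq_of_norm_apply_eq (L : E →L[ℝ] F) {v : E} (hv : ‖L v‖ = ‖L‖ * ‖v‖)
    (x : E) : ⟪L v, L x⟫ = ‖L‖ ^ 2 * ⟪v, x⟫ := by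
  have hquad : ∀ s : ℝ, 0 ≤ (‖L‖ ^ 2 * ‖x‖ ^ 2 - ‖L x‖ ^ 2) * (s * s)
      + 2 * (‖L‖ ^ 2 * ⟪v, x⟫ - ⟪L v, L x⟫) * s + 0 := by
    intro s
    have hle := pow_le_pow_left₀ (norm_nonneg _) (L.le_opNorm (v + s • x)) 2
    rw [map_add, map_smul, mul_pow, norm_add_sq_real, norm_add_sq_real, inner_smul_right,
      inner_smul_right, norm_smul, norm_smul, hv] at hle
    simp only [Real.norm_eq_abs, mul_pow, sq_abs] at hle
    nlinarith
  have hdiscrim := discrim_le_zero hquad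
  rw [discrim] at hdiscrim
  nlinarith [sq_nonneg (‖L‖ ^ 2 * ⟪v, x⟫ - ⟪L v, L x⟫)]

theorem opNorm_mul_abs_inner_le (L : E →L[ℝ] F) {v : E} (hv : ‖v‖ = 1) (hLv : ‖L v‖ = ‖L‖)
    (x : E) : ‖L‖ * |⟪v, x⟫| ≤ ‖L x‖ := by
  have hinner := L.inner_apply_apply_eq_of_norm_apply_eq (by rw [hLv, hv, mul_one]) x
  have hCS := abs_real_inner_le_norm (L v) (L x)
  rw [hinner, hLv, abs_mul, abs_of_nonneg (sq_nonneg _), sq, mul_assoc] at hCS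
  rcases (norm_nonneg L).eq_or_lt with hL | hL
  · rw [← hL, zero_mul]
    exact norm_nonneg _
  · exact le_of_mul_le_mul_left hCS hL

end ContinuousLinearMap

theorem specNorm_pos {m n : Type*} [Fintype m] [Fintype n] [DecidableEq n]
    {A : Matrix m n ℝ} (hA : A ≠ 0) : 0 < specNorm A := by
  refine norm_pos_iff.2 fun h => hA ?_
  exact Matrix.toEuclideanLin.map_eq_zero_iff.1 (LinearMap.toContinuousLinearMap.map_eq_zero_iff.1 h)

open Classical in
theorem stmt3_general {m n K : ℕ} (A : Matrix (Fin m) (Fin n) ℝ) (hA : A ≠ 0)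
    (z : Fin K → EuclideanSpace ℝ (Fin n)) (w : Fin K → ℝ)
    (α₁ α₂ : ℝ) (hα₂ : 0 < α₂) (hα₁₂ : α₂ ≤ α₁)
    (hz : ∀ k, ‖z k‖ ≤ α₁) (hw : ∀ k, 0 ≤ w k)
    (hpsd : ∀ v : EuclideanSpace ℝ (Fin n),
      α₂ ^ 2 * (∑ k, w k) / n * ‖v‖ ^ 2 ≤ ∑ k, w k * ⟪z k, v⟫ ^ 2)
    (t : ℝ) (ht0 : 0 ≤ t) (ht : t ≤ α₂ / Real.sqrt n) :
    (α₂ ^ 2 / n - t ^ 2) / (α₁ ^ 2 - t ^ 2) * ∑ j, w j ≤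
      ∑ k ∈ Finset.univ.filter
        (fun k => t * specNorm A < ‖Matrix.toEuclideanLin A (z k)‖), w k := by
  have hn : 0 < n := Nat.pos_of_ne_zero <| by rintro rfl; exact hA (Subsingleton.elim _ _)
  have : Nonempty (Fin n) := Fin.pos_iff_nonempty.1 hn
  set L := LinearMap.toContinuousLinearMap (Matrix.toEuclideanLin A)
  obtain ⟨v, hv, hLv⟩ := L.exists_norm_eq_one_norm_apply_eq_opNorm
  have hL : 0 < ‖L‖ := specNorm_pos hA
  have hsmall : ∀ k, ¬t * specNorm A < ‖Matrix.toEuclideanLin A (z k)‖ →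
      ⟪z k, v⟫ ^ 2 ≤ t ^ 2 := fun k hk => by
    have habs : |⟪z k, v⟫| ≤ t := by
      refine le_of_mul_le_mul_left ?_ hL
      rw [real_inner_comm, mul_comm ‖L‖ t]
      exact (L.opNorm_mul_abs_inner_le hv hLv (z k)).trans (not_lt.1 hk)
    exact sq_le_sq' (abs_le.1 habs).1 (abs_le.1 habs).2
  have hbig : ∀ k, ⟪z k, v⟫ ^ 2 ≤ α₁ ^ 2 := fun k => by
    have habs : |⟪z k, v⟫| ≤ α₁ :=
      (abs_real_inner_le_norm (z k) v).trans (by rw [hv, mul_one]; exact hz k)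
    exact sq_le_sq' (abs_le.1 habs).1 (abs_le.1 habs).2
  have hsplit := Finset.sum_mul_le_of_le_of_forall_not_le _ hw hbig hsmall
  have hframe := hpsd v
  rw [hv, one_pow, mul_one] at hframe
  have htα₁ : t ≤ α₁ := ht.trans <|
    (div_le_self hα₂.le (Real.one_le_sqrt.2 (by exact_mod_cast hn))).trans hα₁₂
  rw [div_mul_eq_mul_div]
  refine div_le_of_le_mul₀ (sub_nonneg.2 (pow_le_pow_left₀ ht0 htα₁ 2))
    (Finset.sum_nonneg fun k _ => hw k) ?_
  calc (α₂ ^ 2 / n - t ^ 2) * ∑ j, w j = α₂ ^ 2 * (∑ k, w k) / n - t ^ 2 * ∑ j, w j := by ring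
    _ ≤ _ := by linarith

open Classical in
/-- Lemma on fractions of weighted vectors with large image under `A`. -/
theorem stmt3 {m n K : ℕ} (A : Matrix (Fin m) (Fin n) ℝ) (hA : A ≠ 0)
    (z : Fin K → EuclideanSpace ℝ (Fin n)) (w : Fin K → ℝ)
    (α₁ α₂ : ℝ) (hα₂ : 0 < α₂) (hα₁₂ : α₂ ≤ α₁)
    (hz : ∀ k, ‖z k‖ ≤ α₁) (hw : ∀ k, 0 ≤ w k) (hwpos : 0 < ∑ k, w k)
    (hpsd : ∀ v : EuclideanSpace ℝ (Fin n),
      α₂ ^ 2 * (∑ k, w k) / n * ‖v‖ ^ 2 ≤ ∑ k, w k * ⟪z k, v⟫ ^ 2)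
    (t : ℝ) (ht0 : 0 ≤ t) (ht : t ≤ α₂ / Real.sqrt n) :
    (α₂ ^ 2 / n - t ^ 2) / (α₁ ^ 2 - t ^ 2) * ∑ j, w j ≤
      ∑ k ∈ Finset.univ.filter
        (fun k => t * specNorm A < ‖Matrix.toEuclideanLin A (z k)‖), w k :=
  stmt3_general A hA z w α₁ α₂ hα₂ hα₁₂ hz hw hpsd t ht0 ht
end
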